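/- arXiv:2311.08963 — 10 statements merged into one kernel-verified Lean document; each statement's English description precedes it below -/
import Mathlib

section
/- Let β₁, β₀, c ∈ ℝ and let W : [0,1]² → ℝ be defined by W(x,y) = β₁x + β₀y + c if x > y; W(x,y) = (β₁+β₀)x + c if x = y; W(x,y) = β₁y + β₀x + c if x < y. Fix any ε ∈ [0,1] and define (x*, y*) by: (1,1) if β₁ > 0 and β₀ ≥ 0; (1,0) if β₁ > 0 and β₀ < 0; (1,1) if β₁ = 0 and β₀ > 0; (ε,ε) if β₁ = 0 and β₀ = 0; (0,0) if β₁ = 0 and β₀ < 0; (0,0) if β₁ < 0, β₀ > 0, and β₁ + β₀ < 0; (ε,ε) if β₁ < 0, β₀ > 0, and β₁ + β₀ = 0; (1,1) if β₁ < 0, β₀ > 0, and β₁ + β₀ > 0; (0,0) if β₁ < 0 and β₀ ≤ 0. Then W(x*, y*) ≥ W(x, y) for all (x, y) ∈ [0,1]², and moreover x* ≥ y*. -/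
set_option maxHeartbeats 1000000 in
/-- Proposition 1: The optimal ITR `(x*, y*)` defined by cases on the
signs of `β₁`, `β₀`, `β₁ + β₀` maximizes the welfare `W` under stated preference
observation over `[0,1]²`, and it is strategy-proof (`x* ≥ y*`). -/
theorem stmt_5 (β₁ β₀ c : ℝ) (ε : ℝ) (hε : ε ∈ Set.Icc (0:ℝ) 1)
    (W : ℝ → ℝ → ℝ)
    (hW : ∀ x y, W x y =
      if x > y then β₁ * x + β₀ * y + c
      else if x = y then (β₁ + β₀) * x + c
      else β₁ * y + β₀ * x + c)
    (xs ys : ℝ)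
    (hxy : (xs, ys) =
      if β₁ > 0 ∧ β₀ ≥ 0 then ((1:ℝ), (1:ℝ))
      else if β₁ > 0 ∧ β₀ < 0 then (1, 0)
      else if β₁ = 0 ∧ β₀ > 0 then (1, 1)
      else if β₁ = 0 ∧ β₀ = 0 then (ε, ε)
      else if β₁ = 0 ∧ β₀ < 0 then (0, 0)
      else if β₁ < 0 ∧ β₀ > 0 ∧ β₁ + β₀ < 0 then (0, 0)
      else if β₁ < 0 ∧ β₀ > 0 ∧ β₁ + β₀ = 0 then (ε, ε)
      else if β₁ < 0 ∧ β₀ > 0 ∧ β₁ + β₀ > 0 then (1, 1)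
      else (0, 0)) :
    (∀ x ∈ Set.Icc (0:ℝ) 1, ∀ y ∈ Set.Icc (0:ℝ) 1, W x y ≤ W xs ys) ∧ xs ≥ ys := by
  obtain ⟨hε0, hε1⟩ := hε
  have h11 : W 1 1 = (β₁ + β₀) * 1 + c := by rw [hW]; norm_num
  have h10 : W 1 0 = β₁ * 1 + β₀ * 0 + c := by rw [hW]; norm_num
  have h00 : W 0 0 = (β₁ + β₀) * 0 + c := by rw [hW]; norm_num
  have hee : W ε ε = (β₁ + β₀) * ε + c := by
    rw [hW, if_neg (lt_irrefl ε), if_pos rfl]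
  split_ifs at hxy with c1 c2 c3 c4 c5 c6 c7 c8 <;>
    simp only [Prod.mk.injEq] at hxy <;> obtain ⟨h1, h2⟩ := hxy <;>
    subst h1 <;> subst h2
  -- case 1: β₁ > 0, β₀ ≥ 0, (1,1)
  · obtain ⟨hb1, hb0⟩ := c1
    refine ⟨fun x hx y hy => ?_, by norm_num⟩
    obtain ⟨hx0, hx1⟩ := hx; obtain ⟨hy0, hy1⟩ := hy
    rw [hW, h11]
    split_ifs <;> nlinarith
  -- case 2: β₁ > 0, β₀ < 0, (1,0)
  · obtain ⟨hb1, hb0⟩ := c2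
    refine ⟨fun x hx y hy => ?_, by norm_num⟩
    obtain ⟨hx0, hx1⟩ := hx; obtain ⟨hy0, hy1⟩ := hy
    rw [hW, h10]
    split_ifs <;> nlinarith [mul_nonneg hy0 (neg_nonneg.mpr hb0.le),
      mul_nonneg hx0 (neg_nonneg.mpr hb0.le)]
  -- case 3: β₁ = 0, β₀ > 0, (1,1)
  · obtain ⟨hb1, hb0⟩ := c3
    refine ⟨fun x hx y hy => ?_, by norm_num⟩
    obtain ⟨hx0, hx1⟩ := hx; obtain ⟨hy0, hy1⟩ := hy
    rw [hW, h11]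
    split_ifs <;> nlinarith
  -- case 4: β₁ = 0, β₀ = 0, (ε,ε)
  · obtain ⟨hb1, hb0⟩ := c4
    refine ⟨fun x hx y hy => ?_, le_refl _⟩
    obtain ⟨hx0, hx1⟩ := hx; obtain ⟨hy0, hy1⟩ := hy
    rw [hW, hee]
    split_ifs <;> nlinarith
  -- case 5: β₁ = 0, β₀ < 0, (0,0)
  · obtain ⟨hb1, hb0⟩ := c5
    refine ⟨fun x hx y hy => ?_, by norm_num⟩
    obtain ⟨hx0, hx1⟩ := hx; obtain ⟨hy0, hy1⟩ := hy
    rw [hW, h00]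
    split_ifs <;> nlinarith [mul_nonneg hy0 (neg_nonneg.mpr hb0.le),
      mul_nonneg hx0 (neg_nonneg.mpr hb0.le)]
  -- case 6: β₁ < 0, β₀ > 0, β₁+β₀ < 0, (0,0)
  · obtain ⟨hb1, hb0, hs⟩ := c6
    refine ⟨fun x hx y hy => ?_, by norm_num⟩
    obtain ⟨hx0, hx1⟩ := hx; obtain ⟨hy0, hy1⟩ := hy
    rw [hW, h00]
    split_ifs with g1 g2
    · nlinarith [mul_nonneg hx0 (neg_nonneg.mpr hs.le),
        mul_le_mul_of_nonneg_left g1.le hb0.le]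
    · nlinarith [mul_nonneg hx0 (neg_nonneg.mpr hs.le)]
    · have hlt : x < y := lt_of_le_of_ne (not_lt.mp g1) g2
      nlinarith [mul_nonneg hy0 (neg_nonneg.mpr hs.le),
        mul_le_mul_of_nonneg_left hlt.le hb0.le]
  -- case 7: β₁ < 0, β₀ > 0, β₁+β₀ = 0, (ε,ε)
  · obtain ⟨hb1, hb0, hs⟩ := c7
    refine ⟨fun x hx y hy => ?_, le_refl _⟩
    obtain ⟨hx0, hx1⟩ := hx; obtain ⟨hy0, hy1⟩ := hy
    rw [hW, hee, hs, zero_mul, zero_add]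
    split_ifs with g1 g2
    · nlinarith [mul_eq_zero_of_left hs x,
        mul_le_mul_of_nonneg_left g1.le hb0.le]
    · nlinarith [mul_eq_zero_of_left hs x]
    · have hlt : x < y := lt_of_le_of_ne (not_lt.mp g1) g2
      nlinarith [mul_eq_zero_of_left hs y,
        mul_le_mul_of_nonneg_left hlt.le hb0.le]
  -- case 8: β₁ < 0, β₀ > 0, β₁+β₀ > 0, (1,1)
  · obtain ⟨hb1, hb0, hs⟩ := c8
    refine ⟨fun x hx y hy => ?_, by norm_num⟩
    obtain ⟨hx0, hx1⟩ := hx; obtain ⟨hy0, hy1⟩ := hy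
    rw [hW, h11]
    split_ifs with g1 g2
    · nlinarith [mul_le_of_le_one_right hs.le hx1,
        mul_le_mul_of_nonneg_left g1.le hb0.le]
    · nlinarith [mul_le_of_le_one_right hs.le hx1]
    · have hlt : x < y := lt_of_le_of_ne (not_lt.mp g1) g2
      nlinarith [mul_le_of_le_one_right hs.le hy1,
        mul_le_mul_of_nonneg_left hlt.le hb0.le]
  -- case 9: remaining, i.e. β₁ < 0 and β₀ ≤ 0, (0,0)
  · have hb1 : β₁ < 0 := by
      rcases lt_trichotomy β₁ 0 with h | h | h
      · exact h
      · exfalso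
        rcases lt_trichotomy β₀ 0 with g | g | g
        · exact c5 ⟨h, g⟩
        · exact c4 ⟨h, g⟩
        · exact c3 ⟨h, g⟩
      · rcases le_or_gt 0 β₀ with g | g
        · exact absurd ⟨h, g⟩ c1
        · exact absurd ⟨h, g⟩ c2
    have hb0 : β₀ ≤ 0 := by
      by_contra g
      push_neg at g
      rcases lt_trichotomy (β₁ + β₀) 0 with s | s | s
      · exact c6 ⟨hb1, g, s⟩
      · exact c7 ⟨hb1, g, s⟩
      · exact c8 ⟨hb1, g, s⟩
    refine ⟨fun x hx y hy => ?_, by norm_num⟩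
    obtain ⟨hx0, hx1⟩ := hx; obtain ⟨hy0, hy1⟩ := hy
    rw [hW, h00]
    split_ifs <;> nlinarith [mul_nonneg hx0 (neg_nonneg.mpr hb1.le),
      mul_nonneg hy0 (neg_nonneg.mpr hb1.le),
      mul_nonneg hx0 (neg_nonneg.mpr hb0), mul_nonneg hy0 (neg_nonneg.mpr hb0)]
end

section
/- Let β₁, β₀, c ∈ ℝ with β₁ > 0 and β₀ < 0, and let W : [0,1]² → ℝ be defined by W(x,y) = β₁x + β₀y + c if x > y; W(x,y) = (β₁+β₀)x + c if x = y; W(x,y) = β₁y + β₀x + c if x < y. Then W(1,0) ≥ W(x,y) for all (x,y) ∈ [0,1]², and W(1,0) = β₁ + c. -/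
/-- When `β₁ > 0` and `β₀ < 0`, the ITR `(1,0)` maximizes the welfare
`W` under stated preference observation over `[0,1]²`, with `W(1,0) = β₁ + c`. -/
theorem stmt_7 (β₁ β₀ c : ℝ) (h₁ : β₁ > 0) (h₀ : β₀ < 0)
    (W : ℝ → ℝ → ℝ)
    (hW : ∀ x y, W x y =
      if x > y then β₁ * x + β₀ * y + c
      else if x = y then (β₁ + β₀) * x + c
      else β₁ * y + β₀ * x + c) :
    (∀ x ∈ Set.Icc (0:ℝ) 1, ∀ y ∈ Set.Icc (0:ℝ) 1, W x y ≤ W 1 0) ∧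
      W 1 0 = β₁ + c := by
  have h10 : W 1 0 = β₁ + c := by
    rw [hW]; norm_num
  refine ⟨?_, h10⟩
  intro x hx y hy
  obtain ⟨hx0, hx1⟩ := hx
  obtain ⟨hy0, hy1⟩ := hy
  rw [hW, h10]
  rcases lt_trichotomy x y with h | h | h
  · rw [if_neg (not_lt.mpr h.le), if_neg h.ne]
    nlinarith
  · rw [if_neg (lt_irrefl _ ∘ (h ▸ ·)), if_pos h]
    nlinarith
  · rw [if_pos h]
    nlinarith
end

section
/- Let β₁, β₀, c ∈ ℝ with β₁ < 0, β₀ > 0, and β₁ + β₀ ≤ 0, and let W : [0,1]² → ℝ be defined by W(x,y) = β₁x + β₀y + c if x > y; W(x,y) = (β₁+β₀)x + c if x = y; W(x,y) = β₁y + β₀x + c if x < y. Then W(0,0) ≥ W(x,y) for all (x,y) ∈ [0,1]², and W(0,0) = c. -/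
/-- When `β₁ < 0`, `β₀ > 0`, and `β₁ + β₀ ≤ 0`, the ITR `(0,0)`
maximizes the welfare `W` under stated preference observation over `[0,1]²`,
with `W(0,0) = c`. -/
theorem stmt_8 (β₁ β₀ c : ℝ) (h₁ : β₁ < 0) (h₀ : β₀ > 0) (hsum : β₁ + β₀ ≤ 0)
    (W : ℝ → ℝ → ℝ)
    (hW : ∀ x y, W x y =
      if x > y then β₁ * x + β₀ * y + c
      else if x = y then (β₁ + β₀) * x + c
      else β₁ * y + β₀ * x + c) :
    (∀ x ∈ Set.Icc (0:ℝ) 1, ∀ y ∈ Set.Icc (0:ℝ) 1, W x y ≤ W 0 0) ∧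
      W 0 0 = c := by
  have h00 : W 0 0 = c := by simp [hW]
  refine ⟨fun x hx y hy => ?_, h00⟩
  rw [hW, h00]
  obtain ⟨hx0, hx1⟩ := hx
  obtain ⟨hy0, hy1⟩ := hy
  split_ifs with h h'
  · nlinarith
  · nlinarith
  · nlinarith [lt_of_le_of_ne (not_lt.mp h) h']
end

section
/- Let β₁, β₀, c ∈ ℝ with β₁ < 0, β₀ > 0, and β₁ + β₀ > 0, and let W : [0,1]² → ℝ be defined by W(x,y) = β₁x + β₀y + c if x > y; W(x,y) = (β₁+β₀)x + c if x = y; W(x,y) = β₁y + β₀x + c if x < y. Then W(1,1) ≥ W(x,y) for all (x,y) ∈ [0,1]², and W(1,1) = β₁ + β₀ + c. -/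
/-- When `β₁ < 0`, `β₀ > 0`, and `β₁ + β₀ > 0`, the ITR `(1,1)`
maximizes the welfare `W` under stated preference observation over `[0,1]²`,
with `W(1,1) = β₁ + β₀ + c`. -/
theorem stmt_9 (β₁ β₀ c : ℝ) (h₁ : β₁ < 0) (h₀ : β₀ > 0) (hsum : β₁ + β₀ > 0)
    (W : ℝ → ℝ → ℝ)
    (hW : ∀ x y, W x y =
      if x > y then β₁ * x + β₀ * y + c
      else if x = y then (β₁ + β₀) * x + c
      else β₁ * y + β₀ * x + c) :
    (∀ x ∈ Set.Icc (0:ℝ) 1, ∀ y ∈ Set.Icc (0:ℝ) 1, W x y ≤ W 1 1) ∧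
      W 1 1 = β₁ + β₀ + c := by
  have h11 : W 1 1 = β₁ + β₀ + c := by rw [hW]; simp
  refine ⟨fun x hx y hy => ?_, h11⟩
  rw [h11, hW]
  obtain ⟨hx0, hx1⟩ := hx
  obtain ⟨hy0, hy1⟩ := hy
  split_ifs with h h'
  · nlinarith
  · nlinarith
  · nlinarith [lt_of_le_of_ne (not_lt.mp h) h']
end

section
/- Let β₁, β₀, c ∈ ℝ with β₁ < 0, β₀ > 0, and β₁ + β₀ = 0, and let W : [0,1]² → ℝ be defined by W(x,y) = β₁x + β₀y + c if x > y; W(x,y) = (β₁+β₀)x + c if x = y; W(x,y) = β₁y + β₀x + c if x < y. Then for every ε ∈ [0,1], W(ε,ε) = c and W(ε,ε) ≥ W(x,y) for all (x,y) ∈ [0,1]². -/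
/-- When `β₁ < 0`, `β₀ > 0`, and `β₁ + β₀ = 0`, every ITR `(ε,ε)` with
`ε ∈ [0,1]` attains welfare `c` and maximizes the welfare `W` under stated
preference observation over `[0,1]²`. -/
theorem stmt_10 (β₁ β₀ c : ℝ) (h₁ : β₁ < 0) (h₀ : β₀ > 0) (hsum : β₁ + β₀ = 0)
    (W : ℝ → ℝ → ℝ)
    (hW : ∀ x y, W x y =
      if x > y then β₁ * x + β₀ * y + c
      else if x = y then (β₁ + β₀) * x + c
      else β₁ * y + β₀ * x + c) :
    ∀ ε ∈ Set.Icc (0:ℝ) 1,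
      W ε ε = c ∧ ∀ x ∈ Set.Icc (0:ℝ) 1, ∀ y ∈ Set.Icc (0:ℝ) 1, W x y ≤ W ε ε := by
  have hb : β₁ = -β₀ := by linarith
  subst hb
  intro ε hε
  have hWε : W ε ε = c := by rw [hW]; simp [hsum]
  refine ⟨hWε, fun x hx y hy => ?_⟩
  rw [hWε, hW]
  rcases lt_trichotomy x y with h | h | h
  · rw [if_neg (by linarith), if_neg (by linarith)]; nlinarith [mul_pos h₀ (sub_pos.mpr h)]
  · subst h; simp [hsum]
  · rw [if_pos h]; nlinarith [mul_pos h₀ (sub_pos.mpr h)]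
end

section
/- Let β₁, β₀, c ∈ ℝ with β₁ ≠ β₀, and let W : [0,1]² → ℝ be defined by W(x,y) = β₁x + β₀y + c if x > y; W(x,y) = (β₁+β₀)x + c if x = y; W(x,y) = β₁y + β₀x + c if x < y. Define g(α) := (W(1/2 + α, 1/2) − W(1/2, 1/2))/α for α ≠ 0 with |α| < 1/2. Then g(α) = β₁ for all α ∈ (0, 1/2) and g(α) = β₀ for all α ∈ (−1/2, 0); consequently, the limit of g(α) as α → 0 does not exist, i.e., there is no L ∈ ℝ such that g(α) → L as α → 0. -/
/-- The difference quotient of the welfare `W` at `(1/2, 1/2)` in the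
direction `(1,0)` equals `β₁` from the right and `β₀` from the left; when
`β₁ ≠ β₀` the limit as `α → 0` (over nonzero `α`) does not exist, so `W` is not
Gateaux differentiable there. -/
theorem stmt_11 (β₁ β₀ c : ℝ) (hne : β₁ ≠ β₀)
    (W : ℝ → ℝ → ℝ)
    (hW : ∀ x y, W x y =
      if x > y then β₁ * x + β₀ * y + c
      else if x = y then (β₁ + β₀) * x + c
      else β₁ * y + β₀ * x + c)
    (g : ℝ → ℝ)
    (hg : ∀ α, g α = (W (1/2 + α) (1/2) - W (1/2) (1/2)) / α) :
    (∀ α ∈ Set.Ioo (0:ℝ) (1/2), g α = β₁) ∧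
    (∀ α ∈ Set.Ioo (-(1/2) : ℝ) 0, g α = β₀) ∧
    ¬ ∃ L : ℝ, Filter.Tendsto g (nhdsWithin 0 {0}ᶜ) (nhds L) := by
  have hpos : ∀ α : ℝ, 0 < α → g α = β₁ := by
    intro α hα
    rw [hg, hW, hW]
    rw [if_pos (by linarith : (1:ℝ)/2 + α > 1/2)]
    rw [if_neg (lt_irrefl _), if_pos rfl]
    rw [div_eq_iff hα.ne']
    ring
  have hneg : ∀ α : ℝ, α < 0 → g α = β₀ := by
    intro α hα
    rw [hg, hW, hW]
    rw [if_neg (by push_neg; linarith : ¬ (1:ℝ)/2 + α > 1/2)]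
    rw [if_neg (by linarith : (1:ℝ)/2 + α ≠ 1/2)]
    rw [if_neg (lt_irrefl _), if_pos rfl]
    rw [div_eq_iff hα.ne]
    ring
  refine ⟨fun α hα => hpos α hα.1, fun α hα => hneg α hα.2, ?_⟩
  rintro ⟨L, hL⟩
  have h1 : Filter.Tendsto g (nhdsWithin 0 (Set.Ioi 0)) (nhds L) :=
    hL.mono_left (nhdsWithin_mono 0 (fun x hx => ne_of_gt hx))
  have h2 : Filter.Tendsto g (nhdsWithin 0 (Set.Iio 0)) (nhds L) :=
    hL.mono_left (nhdsWithin_mono 0 (fun x hx => ne_of_lt hx))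
  have e1 : g =ᶠ[nhdsWithin (0:ℝ) (Set.Ioi 0)] fun _ => β₁ :=
    eventually_nhdsWithin_of_forall (fun x hx => hpos x hx)
  have e2 : g =ᶠ[nhdsWithin (0:ℝ) (Set.Iio 0)] fun _ => β₀ :=
    eventually_nhdsWithin_of_forall (fun x hx => hneg x hx)
  have t1 : Filter.Tendsto (fun _ : ℝ => β₁) (nhdsWithin 0 (Set.Ioi 0)) (nhds L) :=
    h1.congr' e1
  have t2 : Filter.Tendsto (fun _ : ℝ => β₀) (nhdsWithin 0 (Set.Iio 0)) (nhds L) :=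
    h2.congr' e2
  have hb1 : β₁ = L := tendsto_nhds_unique tendsto_const_nhds t1
  have hb2 : β₀ = L := tendsto_nhds_unique tendsto_const_nhds t2
  exact hne (hb1.trans hb2.symm)
end

section
/- Let (Ω, μ) be a probability space on a standard Borel space, Y₀, Y₁ : Ω → ℝ bounded measurable random variables, and D, T : Ω → {0,1} measurable. Assume the pair (Y₀, Y₁) is conditionally independent of D given the σ-algebra generated by T. Let Y := Y₁·1{D = 1} + Y₀·1{D = 0}. Fix t ∈ {0,1} and suppose μ(D = 1, T = t) > 0, μ(D = 0, T = t) > 0, and μ(T = t) > 0. Then E[Y·1{D = 1, T = t}]/μ(D = 1, T = t) − E[Y·1{D = 0, T = t}]/μ(D = 0, T = t) = E[(Y₁ − Y₀)·1{T = t}]/μ(T = t). -/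
/-! On the fiber `{T = t}` every `σ(T)`-measurable function is constant, so a conditional
expectation given `T` equals there the average over the fiber, i.e. an expectation under
`μ[|T = t]`. Hence conditional independence of `(Y₀, Y₁)` and `D` given `T` becomes plain
independence under `μ[|T = t]`, where `E[Y · 1{D = d}] = E[Y_d] · P(D = d)`. Dividing by
`P(D = d)` turns each conditional mean of `Y` into `E[Y_d | T = t]`, and their difference is the
conditional average treatment effect. -/

open MeasureTheory ProbabilityTheory

namespace ProbabilityTheory

variable {Ω β : Type*} {mΩ : MeasurableSpace Ω} {μ : Measure Ω} {T : Ω → β} {t : β}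

lemma setIntegral_eq_measureReal_mul_integral_cond [IsFiniteMeasure μ] (s : Set Ω)
    (f : Ω → ℝ) : ∫ ω in s, f ω ∂μ = μ.real s * ∫ ω, f ω ∂μ[|s] := by
  by_cases hs : μ s = 0
  · simp [Measure.restrict_eq_zero.2 hs, measureReal_def, hs]
  rw [cond, integral_smul_measure, ENNReal.toReal_inv, ← measureReal_def, smul_eq_mul,
    mul_inv_cancel_left₀ ((measureReal_ne_zero_iff (measure_ne_top μ s)).2 hs)]

lemma integral_mul_ite_eq_measureReal_mul_integral_cond [IsFiniteMeasure μ] {p : Ω → Prop}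
    [DecidablePred p] (hp : MeasurableSet {ω | p ω}) (f : Ω → ℝ) :
    ∫ ω, f ω * (if p ω then 1 else 0) ∂μ = μ.real {ω | p ω} * ∫ ω, f ω ∂μ[|{ω | p ω}] := by
  rw [← setIntegral_eq_measureReal_mul_integral_cond, ← integral_indicator hp]
  congr with ω
  by_cases h : p ω <;> simp [h]

lemma condExp_comap_eq_integral_cond [IsFiniteMeasure μ]
    (hm : MeasurableSpace.comap T ⊤ ≤ mΩ) {f : Ω → ℝ} (hf : Integrable f μ)
    (ht : μ (T ⁻¹' {t}) ≠ 0) {ω : Ω} (hω : T ω = t) :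
    μ[f | MeasurableSpace.comap T ⊤] ω = ∫ x, f x ∂μ[|T ⁻¹' {t}] := by
  have hfiber : MeasurableSet[MeasurableSpace.comap T ⊤] (T ⁻¹' {t}) := ⟨{t}, trivial, rfl⟩
  have hconst : ∀ x ∈ T ⁻¹' {t}, μ[f | MeasurableSpace.comap T ⊤] x
      = μ[f | MeasurableSpace.comap T ⊤] ω :=
    fun x hx => stronglyMeasurable_condExp.factorsThrough (mY := ⊤) (hx.trans hω.symm)
  have h := setIntegral_condExp hm hf hfiber
  rw [setIntegral_congr_fun (hm _ hfiber) hconst, setIntegral_const,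
    setIntegral_eq_measureReal_mul_integral_cond, smul_eq_mul] at h
  exact mul_left_cancel₀ ((measureReal_ne_zero_iff (measure_ne_top μ _)).2 ht) h

lemma CondIndepFun.indepFun_cond_preimage_singleton [StandardBorelSpace Ω] [IsFiniteMeasure μ]
    {γ δ : Type*} [MeasurableSpace γ] [MeasurableSpace δ] {X : Ω → γ} {Y : Ω → δ}
    {hm : MeasurableSpace.comap T ⊤ ≤ mΩ}
    (hXY : CondIndepFun (MeasurableSpace.comap T ⊤) hm X Y μ)
    (hX : Measurable X) (hY : Measurable Y) (ht : μ (T ⁻¹' {t}) ≠ 0) :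
    IndepFun X Y μ[|T ⁻¹' {t}] := by
  have : IsProbabilityMeasure μ[|T ⁻¹' {t}] := cond_isProbabilityMeasure ht
  rw [indepFun_iff_measure_inter_preimage_eq_mul]
  intro s u hs hu
  have h := (condIndepFun_iff_condExp_inter_preimage_eq_mul hX hY).mp hXY s u hs hu
  -- The fiber has positive measure, so the a.e. factorisation holds at one of its points.
  obtain ⟨ω, hω, hωt⟩ :=
    (Filter.Eventually.and (cond_absolutelyContinuous.ae_eq h)
      (ae_cond_mem (hm _ ⟨{t}, trivial, rfl⟩))).exists
  have hcond : ∀ A, MeasurableSet A →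
      μ[A.indicator (fun _ => 1) | MeasurableSpace.comap T ⊤] ω = (μ[|T ⁻¹' {t}]).real A := by
    intro A hA
    rw [condExp_comap_eq_integral_cond hm ((integrable_const 1).indicator hA) ht hωt,
      integral_indicator hA, setIntegral_const, smul_eq_mul, mul_one]
  rw [hcond _ ((hX hs).inter (hY hu)), hcond _ (hX hs), hcond _ (hY hu)] at hω
  rw [← ENNReal.toReal_eq_toReal_iff' (measure_ne_top _ _) (by finiteness), ENNReal.toReal_mul]
  exact hω

lemma IndepFun.integral_mul_ite_and [IsFiniteMeasure μ] {δ : Type*} [MeasurableSpace δ]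
    [MeasurableSingletonClass δ] [DecidableEq δ] {p : Ω → Prop} [DecidablePred p]
    (hp : MeasurableSet {ω | p ω}) {Z : Ω → ℝ} {D : Ω → δ} (hZD : IndepFun Z D μ[|{ω | p ω}])
    (hZ : AEStronglyMeasurable Z μ[|{ω | p ω}]) (hD : Measurable D) (d : δ) :
    ∫ ω, Z ω * (if D ω = d ∧ p ω then 1 else 0) ∂μ
      = (∫ ω, Z ω ∂μ[|{ω | p ω}]) * μ.real {ω | D ω = d ∧ p ω} := by
  have hite : (fun ω => Z ω * (if D ω = d ∧ p ω then 1 else 0))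
      = fun ω => (Z ω * if D ω = d then 1 else 0) * if p ω then 1 else 0 := by
    ext ω; split_ifs <;> simp_all
  have hindicator : Measurable fun x : δ => if x = d then (1 : ℝ) else 0 :=
    measurable_const.ite (measurableSet_singleton d) measurable_const
  have hmeas : μ.real {ω | D ω = d ∧ p ω}
      = μ.real {ω | p ω} * ∫ ω, (if D ω = d then 1 else 0) ∂μ[|{ω | p ω}] := by
    rw [← integral_mul_ite_eq_measureReal_mul_integral_cond hp,
      ← integral_indicator_one (s := {ω | D ω = d ∧ p ω})
        ((hD (measurableSet_singleton d)).inter hp)]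
    congr with ω
    by_cases h₁ : D ω = d <;> by_cases h₂ : p ω <;> simp [h₁, h₂]
  have hprod : ∫ ω, Z ω * (if D ω = d then 1 else 0) ∂μ[|{ω | p ω}]
      = (∫ ω, Z ω ∂μ[|{ω | p ω}]) * ∫ ω, (if D ω = d then 1 else 0) ∂μ[|{ω | p ω}] :=
    (hZD.comp measurable_id hindicator).integral_fun_mul_eq_mul_integral hZ
      (hindicator.comp hD).aestronglyMeasurable
  rw [hite, integral_mul_ite_eq_measureReal_mul_integral_cond hp, hprod, hmeas]
  ring

end ProbabilityTheory

theorem stmt_12_general {Ω : Type*} [MeasurableSpace Ω] [StandardBorelSpace Ω]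
    (μ : Measure Ω) [IsProbabilityMeasure μ]
    (Y0 Y1 : Ω → ℝ) (hY0m : Measurable Y0) (hY1m : Measurable Y1)
    (M : ℝ) (hY0b : ∀ ω, |Y0 ω| ≤ M) (hY1b : ∀ ω, |Y1 ω| ≤ M)
    (D T : Ω → Fin 2) (hD : Measurable D) (hT : Measurable T)
    (hCI : CondIndepFun (MeasurableSpace.comap T ⊤) hT.comap_le
      (fun ω => (Y0 ω, Y1 ω)) D μ)
    (Y : Ω → ℝ)
    (hY : ∀ ω, Y ω = Y1 ω * (if D ω = 1 then 1 else 0) + Y0 ω * (if D ω = 0 then 1 else 0))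
    (t : Fin 2)
    (h1t : 0 < μ {ω | D ω = 1 ∧ T ω = t})
    (h0t : 0 < μ {ω | D ω = 0 ∧ T ω = t})
    (ht : 0 < μ {ω | T ω = t}) :
    (∫ ω, Y ω * (if D ω = 1 ∧ T ω = t then 1 else 0) ∂μ) / (μ {ω | D ω = 1 ∧ T ω = t}).toReal
      - (∫ ω, Y ω * (if D ω = 0 ∧ T ω = t then 1 else 0) ∂μ) / (μ {ω | D ω = 0 ∧ T ω = t}).toReal
      = (∫ ω, (Y1 ω - Y0 ω) * (if T ω = t then 1 else 0) ∂μ) / (μ {ω | T ω = t}).toReal := by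
  set ν := μ[|{ω | T ω = t}]
  have hfiber : MeasurableSet {ω | T ω = t} := hT (measurableSet_singleton t)
  have hind : IndepFun (fun ω => (Y0 ω, Y1 ω)) D ν :=
    hCI.indepFun_cond_preimage_singleton (hY0m.prodMk hY1m) hD ht.ne'
  have hind1 : IndepFun Y1 D ν := hind.comp measurable_snd measurable_id
  have hind0 : IndepFun Y0 D ν := hind.comp measurable_fst measurable_id
  have hint : ∀ Z : Ω → ℝ, Measurable Z → (∀ ω, |Z ω| ≤ M) → Integrable Z ν :=
    fun Z hZ hZb => .of_bound hZ.aestronglyMeasurable M (.of_forall hZb)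
  have hY1 : (fun ω => Y ω * if D ω = 1 ∧ T ω = t then 1 else 0)
      = fun ω => Y1 ω * if D ω = 1 ∧ T ω = t then 1 else 0 := by
    ext ω; by_cases h : D ω = 1 <;> simp [hY, h]
  have hY0 : (fun ω => Y ω * if D ω = 0 ∧ T ω = t then 1 else 0)
      = fun ω => Y0 ω * if D ω = 0 ∧ T ω = t then 1 else 0 := by
    ext ω; by_cases h : D ω = 0 <;> simp [hY, h]
  have hpos : ∀ s, 0 < μ s → μ.real s ≠ 0 := fun s hs =>
    (measureReal_ne_zero_iff (measure_ne_top μ s)).2 hs.ne'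
  simp only [← measureReal_def]
  calc _ = (∫ ω, Y1 ω ∂ν) * μ.real {ω | D ω = 1 ∧ T ω = t} / μ.real {ω | D ω = 1 ∧ T ω = t}
        - (∫ ω, Y0 ω ∂ν) * μ.real {ω | D ω = 0 ∧ T ω = t} / μ.real {ω | D ω = 0 ∧ T ω = t} := by
        rw [hY1, hY0, hind1.integral_mul_ite_and hfiber hY1m.aestronglyMeasurable hD,
          hind0.integral_mul_ite_and hfiber hY0m.aestronglyMeasurable hD]
    _ = ∫ ω, Y1 ω ∂ν - ∫ ω, Y0 ω ∂ν := by
        rw [mul_div_cancel_right₀ _ (hpos _ h1t), mul_div_cancel_right₀ _ (hpos _ h0t)]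
    _ = _ := by
        rw [integral_mul_ite_eq_measureReal_mul_integral_cond hfiber,
          integral_sub (hint Y1 hY1m hY1b) (hint Y0 hY0m hY0b), mul_div_cancel_left₀ _ (hpos _ ht)]

/-- In a strictly strategy-proof RCT (unconfoundedness of `(Y₀,Y₁)`
and `D` given `T`), the difference of conditional means of the observed outcome
identifies the conditional average treatment effect given the preference type:
`E[Y | D=1, T=t] - E[Y | D=0, T=t] = E[(Y₁-Y₀) 1{T=t}] / P(T=t)`. -/
theorem stmt_12 {Ω : Type*} [MeasurableSpace Ω] [StandardBorelSpace Ω] [Nonempty Ω]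
    (μ : Measure Ω) [IsProbabilityMeasure μ]
    (Y0 Y1 : Ω → ℝ) (hY0m : Measurable Y0) (hY1m : Measurable Y1)
    (M : ℝ) (hY0b : ∀ ω, |Y0 ω| ≤ M) (hY1b : ∀ ω, |Y1 ω| ≤ M)
    (D T : Ω → Fin 2) (hD : Measurable D) (hT : Measurable T)
    (hCI : CondIndepFun (MeasurableSpace.comap T ⊤) hT.comap_le
      (fun ω => (Y0 ω, Y1 ω)) D μ)
    (Y : Ω → ℝ)
    (hY : ∀ ω, Y ω = Y1 ω * (if D ω = 1 then 1 else 0) + Y0 ω * (if D ω = 0 then 1 else 0))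
    (t : Fin 2)
    (h1t : 0 < μ {ω | D ω = 1 ∧ T ω = t})
    (h0t : 0 < μ {ω | D ω = 0 ∧ T ω = t})
    (ht : 0 < μ {ω | T ω = t}) :
    (∫ ω, Y ω * (if D ω = 1 ∧ T ω = t then 1 else 0) ∂μ) / (μ {ω | D ω = 1 ∧ T ω = t}).toReal
      - (∫ ω, Y ω * (if D ω = 0 ∧ T ω = t then 1 else 0) ∂μ) / (μ {ω | D ω = 0 ∧ T ω = t}).toReal
      = (∫ ω, (Y1 ω - Y0 ω) * (if T ω = t then 1 else 0) ∂μ) / (μ {ω | T ω = t}).toReal :=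
  stmt_12_general μ Y0 Y1 hY0m hY1m M hY0b hY1b D T hD hT hCI Y hY t h1t h0t ht
end

section
/- Let (Ω, μ) be a probability space, Y₀, Y₁ : Ω → ℝ integrable random variables, T : Ω → {0,1} measurable, and Z : Ω → {0,1,2} measurable with Z independent of the triple (Y₀, Y₁, T). Define D := 1 if Z = 1, D := T if Z = 2, D := 0 if Z = 0, and Y := Y₁·1{D = 1} + Y₀·1{D = 0}. Suppose μ(Z = z) > 0 for all z ∈ {0,1,2} and μ(T = 1) > 0. Then: (a) μ(D = 1, Z = 2)/μ(Z = 2) = μ(T = 1); and (b) ( E[Y·1{Z = 2}]/μ(Z = 2) − E[Y·1{Z = 0}]/μ(Z = 0) ) / μ(T = 1) = E[(Y₁ − Y₀)·1{T = 1}]/μ(T = 1). -/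
/-!
Since `Z` is independent of `(Y₀, Y₁, T)`, conditioning on a group leaves the law of the
triple unchanged. In group 2 the realized treatment is `T`, so `{D = 1, Z = 2}` is
`{T = 1} ∩ {Z = 2}` and the observed outcome there is the outcome `Y_T` under the preferred
treatment; in group 0 it is `Y₀`.
Hence `E[Y | Z = 2] - E[Y | Z = 0] = E[Y_T - Y₀] = E[(Y₁ - Y₀) 1{T = 1}]`.
-/

open MeasureTheory ProbabilityTheory

theorem ProbabilityTheory.IndepFun.integral_mul_ite_eq {Ω β : Type*} [MeasurableSpace Ω]
    {μ : Measure Ω} [MeasurableSpace β] [MeasurableSingletonClass β] [DecidableEq β]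
    {X : Ω → ℝ} {Z : Ω → β}
    (h : IndepFun X Z μ) (hX : AEStronglyMeasurable X μ) (hZ : Measurable Z) (z : β) :
    ∫ ω, X ω * (if Z ω = z then 1 else 0) ∂μ = (∫ ω, X ω ∂μ) * μ.real {ω | Z ω = z} := by
  have hind : (fun ω => if Z ω = z then (1 : ℝ) else 0) = {ω | Z ω = z}.indicator 1 := by
    ext ω; simp [Set.indicator_apply]
  have hmeas : MeasurableSet {ω | Z ω = z} := hZ (measurableSet_singleton z)
  have hXZz : IndepFun X (fun ω => if Z ω = z then (1 : ℝ) else 0) μ :=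
    h.comp measurable_id (ψ := fun b => if b = z then (1 : ℝ) else 0)
      (measurable_const.ite (measurableSet_singleton z) measurable_const)
  rw [← integral_indicator_one hmeas, ← hind]
  refine hXZz.integral_mul_eq_mul_integral hX ?_
  rw [hind]
  exact (stronglyMeasurable_const.indicator hmeas).aestronglyMeasurable

theorem MeasureTheory.Integrable.ite_eq {Ω β E : Type*} [MeasurableSpace Ω] {μ : Measure Ω}
    [NormedAddCommGroup E] [MeasurableSpace β] [MeasurableSingletonClass β] [DecidableEq β]
    {f g : Ω → E} {T : Ω → β}
    (hf : Integrable f μ) (hg : Integrable g μ) (hT : Measurable T) (t : β) :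
    Integrable (fun ω => if T ω = t then f ω else g ω) μ :=
  Integrable.piecewise (s := {ω | T ω = t}) (hT (measurableSet_singleton t))
    hf.integrableOn hg.integrableOn

theorem ite_mul_add_ite_mul_fin_two (y0 y1 : ℝ) (d : Fin 2) :
    y1 * (if d = 1 then 1 else 0) + y0 * (if d = 0 then 1 else 0) = if d = 1 then y1 else y0 := by
  fin_cases d <;> simp

theorem ite_sub_eq_sub_mul_ite (p : Prop) [Decidable p] (a b : ℝ) :
    (if p then a else b) - b = (a - b) * (if p then 1 else 0) := by
  split_ifs <;> ring

section PreferenceTrial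

variable {Ω : Type*} {Y0 Y1 Y : Ω → ℝ} {T D : Ω → Fin 2} {Z : Ω → Fin 3}

theorem setOf_treated_and_group_two_eq
    (hD : ∀ ω, D ω = if Z ω = 1 then 1 else if Z ω = 2 then T ω else 0) :
    {ω | D ω = 1 ∧ Z ω = 2} = T ⁻¹' {1} ∩ Z ⁻¹' {2} := by
  ext ω; by_cases h : Z ω = 2 <;> simp [hD ω, h]

variable [MeasurableSpace Ω] {μ : Measure Ω}

theorem integral_mul_group_two_eq (hY0 : Integrable Y0 μ) (hY1 : Integrable Y1 μ)
    (hT : Measurable T) (hZ : Measurable Z) (hindep : IndepFun (fun ω => (Y0 ω, Y1 ω, T ω)) Z μ)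
    (hD : ∀ ω, D ω = if Z ω = 1 then 1 else if Z ω = 2 then T ω else 0)
    (hY : ∀ ω, Y ω = Y1 ω * (if D ω = 1 then 1 else 0) + Y0 ω * (if D ω = 0 then 1 else 0)) :
    ∫ ω, Y ω * (if Z ω = 2 then 1 else 0) ∂μ
      = (∫ ω, (if T ω = 1 then Y1 ω else Y0 ω) ∂μ) * μ.real {ω | Z ω = 2} := by
  have hpointwise (ω : Ω) : Y ω * (if Z ω = 2 then 1 else 0)
      = (if T ω = 1 then Y1 ω else Y0 ω) * (if Z ω = 2 then 1 else 0) := by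
    rw [hY ω, ite_mul_add_ite_mul_fin_two]
    by_cases h : Z ω = 2 <;> simp [hD ω, h]
  have hindep' : IndepFun (fun ω => if T ω = 1 then Y1 ω else Y0 ω) Z μ := hindep.comp
    (.ite (measurable_snd.snd (measurableSet_singleton 1)) measurable_snd.fst measurable_fst)
    measurable_id
  simp_rw [hpointwise]
  exact hindep'.integral_mul_ite_eq (hY1.ite_eq hY0 hT 1).aestronglyMeasurable hZ 2

theorem integral_mul_group_zero_eq (hY0 : AEStronglyMeasurable Y0 μ) (hZ : Measurable Z)
    (hindep : IndepFun Y0 Z μ)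
    (hD : ∀ ω, D ω = if Z ω = 1 then 1 else if Z ω = 2 then T ω else 0)
    (hY : ∀ ω, Y ω = Y1 ω * (if D ω = 1 then 1 else 0) + Y0 ω * (if D ω = 0 then 1 else 0)) :
    ∫ ω, Y ω * (if Z ω = 0 then 1 else 0) ∂μ = (∫ ω, Y0 ω ∂μ) * μ.real {ω | Z ω = 0} := by
  have hpointwise (ω : Ω) :
      Y ω * (if Z ω = 0 then 1 else 0) = Y0 ω * (if Z ω = 0 then 1 else 0) := by
    by_cases h : Z ω = 0 <;> simp [hY ω, hD ω, h]
  simp_rw [hpointwise]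
  exact hindep.integral_mul_ite_eq hY0 hZ 0

end PreferenceTrial

theorem stmt_14_general {Ω : Type*} [MeasurableSpace Ω] (μ : Measure Ω) [IsProbabilityMeasure μ]
    (Y0 Y1 : Ω → ℝ) (hY0 : Integrable Y0 μ) (hY1 : Integrable Y1 μ)
    (T : Ω → Fin 2) (hT : Measurable T)
    (Z : Ω → Fin 3) (hZ : Measurable Z)
    (hindep : IndepFun (fun ω => (Y0 ω, Y1 ω, T ω)) Z μ)
    (D : Ω → Fin 2)
    (hD : ∀ ω, D ω = if Z ω = 1 then 1 else if Z ω = 2 then T ω else 0)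
    (Y : Ω → ℝ)
    (hY : ∀ ω, Y ω = Y1 ω * (if D ω = 1 then 1 else 0) + Y0 ω * (if D ω = 0 then 1 else 0))
    (hZpos : ∀ z, 0 < μ {ω | Z ω = z}) :
    (μ {ω | D ω = 1 ∧ Z ω = 2}).toReal / (μ {ω | Z ω = 2}).toReal
        = (μ {ω | T ω = 1}).toReal ∧
    ((∫ ω, Y ω * (if Z ω = 2 then 1 else 0) ∂μ) / (μ {ω | Z ω = 2}).toReal
        - (∫ ω, Y ω * (if Z ω = 0 then 1 else 0) ∂μ) / (μ {ω | Z ω = 0}).toReal)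
        / (μ {ω | T ω = 1}).toReal
      = (∫ ω, (Y1 ω - Y0 ω) * (if T ω = 1 then 1 else 0) ∂μ) / (μ {ω | T ω = 1}).toReal := by
  simp only [← measureReal_def]
  have hZ_ne (z : Fin 3) : μ.real {ω | Z ω = z} ≠ 0 :=
    (measureReal_ne_zero_iff (measure_ne_top μ _)).2 (hZpos z).ne'
  refine ⟨?_, ?_⟩
  · have hTZ : IndepFun T Z μ := hindep.comp measurable_snd.snd measurable_id
    rw [setOf_treated_and_group_two_eq hD, measureReal_def,
      hTZ.measure_inter_preimage_eq_mul _ _ (measurableSet_singleton 1) (measurableSet_singleton 2),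
      ENNReal.toReal_mul]
    exact mul_div_cancel_right₀ _ (hZ_ne 2)
  · rw [integral_mul_group_two_eq hY0 hY1 hT hZ hindep hD hY,
      integral_mul_group_zero_eq hY0.1 hZ (hindep.comp measurable_fst measurable_id) hD hY,
      mul_div_cancel_right₀ _ (hZ_ne 2), mul_div_cancel_right₀ _ (hZ_ne 0),
      ← integral_sub (hY1.ite_eq hY0 hT 1) hY0]
    simp only [ite_sub_eq_sub_mul_ite]

/-- In a doubly randomized preference trial (group `Z ∈ {0,1,2}`
independent of `(Y₀, Y₁, T)`; treatment imposed in groups 0 and 1, freely chosen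
in group 2), (a) `P(D = 1 | Z = 2) = P(T = 1)` and (b) the Wald ratio
`(E[Y | Z=2] - E[Y | Z=0]) / P(T=1)` identifies `τ(1) = E[(Y₁-Y₀) 1{T=1}]/P(T=1)`. -/
theorem stmt_14 {Ω : Type*} [MeasurableSpace Ω] (μ : Measure Ω) [IsProbabilityMeasure μ]
    (Y0 Y1 : Ω → ℝ) (hY0 : Integrable Y0 μ) (hY1 : Integrable Y1 μ)
    (T : Ω → Fin 2) (hT : Measurable T)
    (Z : Ω → Fin 3) (hZ : Measurable Z)
    (hindep : IndepFun (fun ω => (Y0 ω, Y1 ω, T ω)) Z μ)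
    (D : Ω → Fin 2)
    (hD : ∀ ω, D ω = if Z ω = 1 then 1 else if Z ω = 2 then T ω else 0)
    (Y : Ω → ℝ)
    (hY : ∀ ω, Y ω = Y1 ω * (if D ω = 1 then 1 else 0) + Y0 ω * (if D ω = 0 then 1 else 0))
    (hZpos : ∀ z, 0 < μ {ω | Z ω = z})
    (hT1 : 0 < μ {ω | T ω = 1}) :
    (μ {ω | D ω = 1 ∧ Z ω = 2}).toReal / (μ {ω | Z ω = 2}).toReal
        = (μ {ω | T ω = 1}).toReal ∧
    ((∫ ω, Y ω * (if Z ω = 2 then 1 else 0) ∂μ) / (μ {ω | Z ω = 2}).toReal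
        - (∫ ω, Y ω * (if Z ω = 0 then 1 else 0) ∂μ) / (μ {ω | Z ω = 0}).toReal)
        / (μ {ω | T ω = 1}).toReal
      = (∫ ω, (Y1 ω - Y0 ω) * (if T ω = 1 then 1 else 0) ∂μ) / (μ {ω | T ω = 1}).toReal :=
  stmt_14_general μ Y0 Y1 hY0 hY1 T hT Z hZ hindep D hD Y hY hZpos
end

section
/- Let (Ω, μ) be a probability space, Y₀, Y₁ : Ω → ℝ integrable random variables, T : Ω → {0,1} measurable, and Z : Ω → {0,1,2} measurable with Z independent of the triple (Y₀, Y₁, T). Define D := 1 if Z = 1, D := T if Z = 2, D := 0 if Z = 0, and Y := Y₁·1{D = 1} + Y₀·1{D = 0}. Suppose μ(Z = z) > 0 for all z ∈ {0,1,2} and μ(T = 0) > 0. Then ( E[Y·1{Z = 1}]/μ(Z = 1) − E[Y·1{Z = 2}]/μ(Z = 2) ) / μ(T = 0) = E[(Y₁ − Y₀)·1{T = 0}]/μ(T = 0). -/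
/-!
Independence of `Z` from `(Y₀, Y₁, T)` factors each arm's contribution as a mean times the arm's
probability: in arm `Z = 1` the observed outcome is `Y₁`, in arm `Z = 2` it is the outcome `Y_T` of
the preferred treatment. So the two normalised arm means are `E[Y₁]` and `E[Y_T]`, and
`Y₁ - Y_T = (Y₁ - Y₀)·1{T = 0}` pointwise.
-/

open MeasureTheory ProbabilityTheory

lemma integral_mul_ite_eq_of_indepFun {Ω β : Type*} [MeasurableSpace Ω] [MeasurableSpace β]
    [MeasurableSingletonClass β] [DecidableEq β] {μ : Measure Ω} {W : Ω → ℝ} {Z : Ω → β}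
    (hW : AEStronglyMeasurable W μ) (hZ : Measurable Z) (hWZ : IndepFun W Z μ) (z : β) :
    ∫ ω, W ω * (if Z ω = z then 1 else 0) ∂μ = (∫ ω, W ω ∂μ) * μ.real {ω | Z ω = z} := by
  have hψ : Measurable fun k : β => if k = z then (1 : ℝ) else 0 :=
    measurable_const.ite (measurableSet_singleton z) measurable_const
  have hWψ : IndepFun W (fun ω => if Z ω = z then (1 : ℝ) else 0) μ :=
    hWZ.comp measurable_id hψ
  rw [hWψ.integral_fun_mul_eq_mul_integral hW (hψ.comp hZ).aestronglyMeasurable]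
  have hs : MeasurableSet {ω | Z ω = z} := hZ (measurableSet_singleton z)
  rw [← integral_indicator_one hs]
  congr with ω
  simp [Set.indicator_apply]

lemma sub_ite_eq_mul_ite (p : Prop) [Decidable p] (a b : ℝ) :
    b - (if p then a else b) = (b - a) * (if p then 1 else 0) := by
  split_ifs <;> ring

section Arms

variable {y₀ y₁ y : ℝ} {t d : Fin 2} {z : Fin 3}
  (hd : d = if z = 1 then 1 else if z = 2 then t else 0)
  (hy : y = y₁ * (if d = 1 then 1 else 0) + y₀ * (if d = 0 then 1 else 0))
include hd hy

lemma observed_mul_ite_imposed_one :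
    y * (if z = 1 then 1 else 0) = y₁ * (if z = 1 then 1 else 0) := by
  by_cases hz : z = 1 <;> simp [hy, hd, hz]

lemma observed_mul_ite_free_choice :
    y * (if z = 2 then 1 else 0) = (if t = 0 then y₀ else y₁) * (if z = 2 then 1 else 0) := by
  by_cases hz : z = 2
  · obtain ht | ht : t = 0 ∨ t = 1 := by omega
    all_goals simp [hy, hd, hz, ht]
  · simp [hz]

end Arms

theorem stmt_15_general {Ω : Type*} [MeasurableSpace Ω] (μ : Measure Ω) [IsProbabilityMeasure μ]
    (Y0 Y1 : Ω → ℝ) (hY0 : Integrable Y0 μ) (hY1 : Integrable Y1 μ)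
    (T : Ω → Fin 2) (hT : Measurable T)
    (Z : Ω → Fin 3) (hZ : Measurable Z)
    (hindep : IndepFun (fun ω => (Y0 ω, Y1 ω, T ω)) Z μ)
    (D : Ω → Fin 2)
    (hD : ∀ ω, D ω = if Z ω = 1 then 1 else if Z ω = 2 then T ω else 0)
    (Y : Ω → ℝ)
    (hY : ∀ ω, Y ω = Y1 ω * (if D ω = 1 then 1 else 0) + Y0 ω * (if D ω = 0 then 1 else 0))
    (hZpos : ∀ z, 0 < μ {ω | Z ω = z}) :
    ((∫ ω, Y ω * (if Z ω = 1 then 1 else 0) ∂μ) / (μ {ω | Z ω = 1}).toReal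
        - (∫ ω, Y ω * (if Z ω = 2 then 1 else 0) ∂μ) / (μ {ω | Z ω = 2}).toReal)
        / (μ {ω | T ω = 0}).toReal
      = (∫ ω, (Y1 ω - Y0 ω) * (if T ω = 0 then 1 else 0) ∂μ) / (μ {ω | T ω = 0}).toReal := by
  set YT : Ω → ℝ := fun ω => if T ω = 0 then Y0 ω else Y1 ω
  have hYT : Integrable YT μ :=
    Integrable.piecewise (s := {ω | T ω = 0}) (hT (measurableSet_singleton 0))
      hY0.integrableOn hY1.integrableOn
  have hindY1 : IndepFun Y1 Z μ :=
    hindep.comp (φ := fun p : ℝ × ℝ × Fin 2 => p.2.1) (by fun_prop) measurable_id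
  have hindYT : IndepFun YT Z μ :=
    hindep.comp (φ := fun p : ℝ × ℝ × Fin 2 => if p.2.2 = 0 then p.1 else p.2.1)
      (.ite ((measurableSet_singleton 0).preimage (by fun_prop)) (by fun_prop) (by fun_prop))
      measurable_id
  have hgap : ∫ ω, Y1 ω ∂μ - ∫ ω, YT ω ∂μ
      = ∫ ω, (Y1 ω - Y0 ω) * (if T ω = 0 then 1 else 0) ∂μ := by
    simp only [← integral_sub hY1 hYT, YT, sub_ite_eq_mul_ite]
  have hpos (z : Fin 3) : (μ {ω | Z ω = z}).toReal ≠ 0 :=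
    ENNReal.toReal_ne_zero.2 ⟨(hZpos z).ne', measure_ne_top _ _⟩
  simp only [fun ω => observed_mul_ite_imposed_one (hD ω) (hY ω),
    fun ω => observed_mul_ite_free_choice (hD ω) (hY ω)]
  rw [integral_mul_ite_eq_of_indepFun hY1.1 hZ hindY1,
    integral_mul_ite_eq_of_indepFun hYT.1 hZ hindYT]
  simp only [measureReal_def, mul_div_cancel_right₀ _ (hpos _), hgap]

/-- In a doubly randomized preference trial, the Wald ratio
`(E[Y | Z=1] - E[Y | Z=2]) / P(T=0)` identifies
`τ(0) = E[(Y₁-Y₀) 1{T=0}] / P(T=0)`. -/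
theorem stmt_15 {Ω : Type*} [MeasurableSpace Ω] (μ : Measure Ω) [IsProbabilityMeasure μ]
    (Y0 Y1 : Ω → ℝ) (hY0 : Integrable Y0 μ) (hY1 : Integrable Y1 μ)
    (T : Ω → Fin 2) (hT : Measurable T)
    (Z : Ω → Fin 3) (hZ : Measurable Z)
    (hindep : IndepFun (fun ω => (Y0 ω, Y1 ω, T ω)) Z μ)
    (D : Ω → Fin 2)
    (hD : ∀ ω, D ω = if Z ω = 1 then 1 else if Z ω = 2 then T ω else 0)
    (Y : Ω → ℝ)
    (hY : ∀ ω, Y ω = Y1 ω * (if D ω = 1 then 1 else 0) + Y0 ω * (if D ω = 0 then 1 else 0))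
    (hZpos : ∀ z, 0 < μ {ω | Z ω = z})
    (hT0 : 0 < μ {ω | T ω = 0}) :
    ((∫ ω, Y ω * (if Z ω = 1 then 1 else 0) ∂μ) / (μ {ω | Z ω = 1}).toReal
        - (∫ ω, Y ω * (if Z ω = 2 then 1 else 0) ∂μ) / (μ {ω | Z ω = 2}).toReal)
        / (μ {ω | T ω = 0}).toReal
      = (∫ ω, (Y1 ω - Y0 ω) * (if T ω = 0 then 1 else 0) ∂μ) / (μ {ω | T ω = 0}).toReal :=
  stmt_15_general μ Y0 Y1 hY0 hY1 T hT Z hZ hindep D hD Y hY hZpos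
end

section
/- Let β₁, β₀, c ∈ ℝ with β₁ > 0 and β₀ < 0, and let W : [0,1]² → ℝ be defined by W(x,y) = β₁x + β₀y + c if x > y; W(x,y) = (β₁+β₀)x + c if x = y; W(x,y) = β₁y + β₀x + c if x < y. Let d : ℝ² → [0,1]² be the plug-in rule: d(b₁, b₀) = (1,0) if b₁ > 0 and b₀ < 0; d(b₁, b₀) = (1,1) if (b₁ ≤ 0 or b₀ ≥ 0) and b₁ + b₀ > 0; d(b₁, b₀) = (0,0) otherwise. Let (Ω, μ) be a probability space and B₁, B₀ : Ω → ℝ measurable. Then E[ W(1,0) − W(d(B₁, B₀)) ] ≤ (β₁ − β₀)·( μ(B₁ ≤ 0) + μ(B₀ ≥ 0) ), and W(1,0) = max over [0,1]² of W. -/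
/-!
Misreporting (`x < y`) and pooling (`x = y`) can only lower welfare when `β₁ > 0 > β₀`, so the
truthful separating rule `(1, 0)` is optimal. The plug-in rule picks it unless `B₁ ≤ 0` or
`B₀ ≥ 0`, and otherwise loses either `-β₀` (at `(1, 1)`) or `β₁` (at `(0, 0)`), both at most
`β₁ - β₀`; a union bound finishes.
-/

open MeasureTheory

namespace StatedPreference

variable (β₁ β₀ c : ℝ)

noncomputable def welfare (x y : ℝ) : ℝ :=
  if x > y then β₁ * x + β₀ * y + c
  else if x = y then (β₁ + β₀) * x + c
  else β₁ * y + β₀ * x + c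

noncomputable def plugInRule (b₁ b₀ : ℝ) : ℝ × ℝ :=
  if b₁ > 0 ∧ b₀ < 0 then ((1:ℝ), (0:ℝ))
  else if (b₁ ≤ 0 ∨ b₀ ≥ 0) ∧ b₁ + b₀ > 0 then (1, 1)
  else (0, 0)

theorem welfare_one_zero : welfare β₁ β₀ c 1 0 = β₁ + c := by
  norm_num [welfare]

variable {β₁ β₀}

theorem welfare_le_welfare_one_zero (h₁ : 0 ≤ β₁) (h₀ : β₀ ≤ 0) {x y : ℝ}
    (hx : x ∈ Set.Icc (0:ℝ) 1) (hy : y ∈ Set.Icc (0:ℝ) 1) :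
    welfare β₁ β₀ c x y ≤ welfare β₁ β₀ c 1 0 := by
  obtain ⟨hx₀, hx₁⟩ := hx
  obtain ⟨hy₀, hy₁⟩ := hy
  rw [welfare_one_zero, welfare]
  split_ifs <;> nlinarith

theorem welfare_one_zero_sub_plugInRule_le (h₁ : 0 ≤ β₁) (h₀ : β₀ ≤ 0) (b₁ b₀ : ℝ) :
    welfare β₁ β₀ c 1 0 - welfare β₁ β₀ c (plugInRule b₁ b₀).1 (plugInRule b₁ b₀).2 ≤
      if b₁ ≤ 0 ∨ b₀ ≥ 0 then β₁ - β₀ else 0 := by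
  rw [welfare_one_zero, plugInRule]
  by_cases hcorrect : b₁ > 0 ∧ b₀ < 0
  · have hnot : ¬(b₁ ≤ 0 ∨ b₀ ≥ 0) := not_or.2 ⟨not_le.2 hcorrect.1, not_le.2 hcorrect.2⟩
    simp only [if_pos hcorrect, if_neg hnot]
    norm_num [welfare]
  · have hwrong : b₁ ≤ 0 ∨ b₀ ≥ 0 := by
      by_contra! h
      exact hcorrect h
    simp only [if_neg hcorrect, if_pos hwrong]
    split_ifs <;> norm_num [welfare] <;> linarith

end StatedPreference

theorem MeasureTheory.integral_le_mul_measureReal_of_le_indicator {Ω : Type*}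
    [MeasurableSpace Ω] {μ : Measure Ω} [IsFiniteMeasure μ] {f : Ω → ℝ} {s : Set Ω} {C : ℝ}
    (hC : 0 ≤ C) (hf : ∀ ω, f ω ≤ s.indicator (fun _ => C) ω) :
    ∫ ω, f ω ∂μ ≤ C * μ.real s := by
  by_cases hint : Integrable f μ
  · -- `s` need not be measurable: bound through its measurable hull instead.
    have hs' := measurableSet_toMeasurable μ s
    calc ∫ ω, f ω ∂μ ≤ ∫ ω, (toMeasurable μ s).indicator (fun _ => C) ω ∂μ :=
          integral_mono hint ((integrable_const C).indicator hs') fun ω =>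
            (hf ω).trans (Set.indicator_le_indicator_of_subset (subset_toMeasurable μ s)
              (fun _ => hC) ω)
      _ = C * μ.real s := by
          rw [integral_indicator_const C hs', measureReal_def, measure_toMeasurable,
            smul_eq_mul, mul_comm, measureReal_def]
  · rw [integral_undef hint]
    exact mul_nonneg hC measureReal_nonneg

open StatedPreference in
theorem stmt_17_general (β₁ β₀ c : ℝ) (h₁ : β₁ > 0) (h₀ : β₀ < 0)
    (W : ℝ → ℝ → ℝ)
    (hW : ∀ x y, W x y =
      if x > y then β₁ * x + β₀ * y + c
      else if x = y then (β₁ + β₀) * x + c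
      else β₁ * y + β₀ * x + c)
    (d : ℝ → ℝ → ℝ × ℝ)
    (hd : ∀ b₁ b₀, d b₁ b₀ =
      if b₁ > 0 ∧ b₀ < 0 then ((1:ℝ), (0:ℝ))
      else if (b₁ ≤ 0 ∨ b₀ ≥ 0) ∧ b₁ + b₀ > 0 then (1, 1)
      else (0, 0))
    {Ω : Type*} [MeasurableSpace Ω] (μ : Measure Ω) [IsProbabilityMeasure μ]
    (B₁ B₀ : Ω → ℝ) :
    (∫ ω, (W 1 0 - W (d (B₁ ω) (B₀ ω)).1 (d (B₁ ω) (B₀ ω)).2) ∂μ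
        ≤ (β₁ - β₀) * ((μ {ω | B₁ ω ≤ 0}).toReal + (μ {ω | B₀ ω ≥ 0}).toReal)) ∧
      (∀ x ∈ Set.Icc (0:ℝ) 1, ∀ y ∈ Set.Icc (0:ℝ) 1, W x y ≤ W 1 0) := by
  obtain rfl : W = welfare β₁ β₀ c := funext fun x => funext (hW x)
  obtain rfl : d = plugInRule := funext fun b₁ => funext (hd b₁)
  refine ⟨?_, fun x hx y hy => welfare_le_welfare_one_zero c h₁.le h₀.le hx hy⟩
  have hregret (ω : Ω) := welfare_one_zero_sub_plugInRule_le c h₁.le h₀.le (B₁ ω) (B₀ ω)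
  calc _ ≤ (β₁ - β₀) * μ.real ({ω | B₁ ω ≤ 0} ∪ {ω | B₀ ω ≥ 0}) :=
        integral_le_mul_measureReal_of_le_indicator (by linarith) fun ω => by
          simpa only [Set.indicator_apply, Set.mem_union, Set.mem_ofPred_eq] using hregret ω
    _ ≤ (β₁ - β₀) * (μ.real {ω | B₁ ω ≤ 0} + μ.real {ω | B₀ ω ≥ 0}) :=
        mul_le_mul_of_nonneg_left (measureReal_union_le _ _) (by linarith)

/-- When `β₁ > 0` and `β₀ < 0`, the expected regret of the plug-in
rule `d(B₁, B₀)` is bounded by `(β₁ - β₀)(P(B₁ ≤ 0) + P(B₀ ≥ 0))`, and `(1,0)`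
maximizes the welfare `W` over `[0,1]²`. -/
theorem stmt_17 (β₁ β₀ c : ℝ) (h₁ : β₁ > 0) (h₀ : β₀ < 0)
    (W : ℝ → ℝ → ℝ)
    (hW : ∀ x y, W x y =
      if x > y then β₁ * x + β₀ * y + c
      else if x = y then (β₁ + β₀) * x + c
      else β₁ * y + β₀ * x + c)
    (d : ℝ → ℝ → ℝ × ℝ)
    (hd : ∀ b₁ b₀, d b₁ b₀ =
      if b₁ > 0 ∧ b₀ < 0 then ((1:ℝ), (0:ℝ))
      else if (b₁ ≤ 0 ∨ b₀ ≥ 0) ∧ b₁ + b₀ > 0 then (1, 1)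
      else (0, 0))
    {Ω : Type*} [MeasurableSpace Ω] (μ : Measure Ω) [IsProbabilityMeasure μ]
    (B₁ B₀ : Ω → ℝ) (hB₁ : Measurable B₁) (hB₀ : Measurable B₀) :
    (∫ ω, (W 1 0 - W (d (B₁ ω) (B₀ ω)).1 (d (B₁ ω) (B₀ ω)).2) ∂μ
        ≤ (β₁ - β₀) * ((μ {ω | B₁ ω ≤ 0}).toReal + (μ {ω | B₀ ω ≥ 0}).toReal)) ∧
      (∀ x ∈ Set.Icc (0:ℝ) 1, ∀ y ∈ Set.Icc (0:ℝ) 1, W x y ≤ W 1 0) :=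
  stmt_17_general β₁ β₀ c h₁ h₀ W hW d hd μ B₁ B₀
end
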